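/- Define R(s,t) = 1 + |μ(s,t)|·c(s,t)·arcsin c(s,t) - c(s,t)² for s,t ∈ (-1,1), with μ(s,t) = (s-t)/(1-st) and c(s,t) = √((1-s²)(1-t²))/(1-st). Then 0 ≤ R(s,t) ≤ 1 for all s,t ∈ (-1,1), with R(s,s) = 0. -/

import Mathlib

/-!
The identity `(1 - st)² - (s - t)² = (1 - s²)(1 - t²)` gives `μ² + c² = 1`, so
`R = μ² + |μ| c arcsin c ≥ 0`. Writing `c = sin θ` with `θ ∈ [0, π/2]`, the upper bound
`|μ| c arcsin c ≤ c²` becomes `θ cos θ ≤ sin θ`, i.e. `θ ≤ tan θ`. On the diagonal `μ = 0` and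
`c = 1`.
-/

open Real

/-- `μ(s,t)`; its absolute value is the pseudo-hyperbolic distance of `s` and `t`. -/
noncomputable def mobius (s t : ℝ) : ℝ := (s - t) / (1 - s * t)

/-- The correlation coefficient `c(s,t)` of `f(s)` and `f(t)` for the Gaussian power series `f`,
whose covariance kernel is `1 / (1 - st)`. -/
noncomputable def powerSeriesCorrelation (s t : ℝ) : ℝ :=
  √((1 - s ^ 2) * (1 - t ^ 2)) / (1 - s * t)

/-- `R(s,t)`. -/
noncomputable def twoPointCorrelationRatio (s t : ℝ) : ℝ :=
  1 + |mobius s t| * powerSeriesCorrelation s t * arcsin (powerSeriesCorrelation s t)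
    - powerSeriesCorrelation s t ^ 2

theorem sqrt_one_sub_sq_mul_arcsin_le {x : ℝ} (h0 : 0 ≤ x) (h1 : x ≤ 1) :
    √(1 - x ^ 2) * arcsin x ≤ x := by
  rcases h1.eq_or_lt with rfl | h1
  · simp
  have hpos : 0 < √(1 - x ^ 2) := sqrt_pos.mpr (by nlinarith)
  have htan : arcsin x ≤ x / √(1 - x ^ 2) := by
    rw [← tan_arcsin]
    exact le_tan (arcsin_nonneg.mpr h0) (arcsin_lt_pi_div_two.mpr h1)
  rw [mul_comm]
  exact (le_div_iff₀ hpos).mp htan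

theorem mul_mul_arcsin_le_sq {m c : ℝ} (hm : 0 ≤ m) (hc : 0 ≤ c) (h : m ^ 2 + c ^ 2 = 1) :
    m * c * arcsin c ≤ c ^ 2 := by
  have hm_eq : m = √(1 - c ^ 2) := by rw [← h, add_sub_cancel_right, sqrt_sq hm]
  have hc1 : c ≤ 1 := by nlinarith
  calc m * c * arcsin c = c * (√(1 - c ^ 2) * arcsin c) := by rw [hm_eq]; ring
    _ ≤ c * c := mul_le_mul_of_nonneg_left (sqrt_one_sub_sq_mul_arcsin_le hc hc1) hc
    _ = c ^ 2 := (sq c).symm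

theorem mobius_self (s : ℝ) : mobius s s = 0 := by simp [mobius]

theorem powerSeriesCorrelation_self {s : ℝ} (hs : s ∈ Set.Ioo (-1 : ℝ) 1) :
    powerSeriesCorrelation s s = 1 := by
  have hpos : 0 < 1 - s ^ 2 := by nlinarith [hs.1, hs.2]
  rw [powerSeriesCorrelation, ← sq, sqrt_sq hpos.le, ← sq, div_self hpos.ne']

section OpenInterval

variable {s t : ℝ} (hs : s ∈ Set.Ioo (-1 : ℝ) 1) (ht : t ∈ Set.Ioo (-1 : ℝ) 1)
include hs ht

theorem one_sub_mul_pos : 0 < 1 - s * t := by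
  nlinarith [hs.1, hs.2, ht.1, ht.2]

theorem powerSeriesCorrelation_nonneg : 0 ≤ powerSeriesCorrelation s t :=
  div_nonneg (sqrt_nonneg _) (one_sub_mul_pos hs ht).le

theorem mobius_sq_add_powerSeriesCorrelation_sq :
    mobius s t ^ 2 + powerSeriesCorrelation s t ^ 2 = 1 := by
  have hst := one_sub_mul_pos hs ht
  have hrad : 0 ≤ (1 - s ^ 2) * (1 - t ^ 2) :=
    mul_nonneg (by nlinarith [hs.1, hs.2]) (by nlinarith [ht.1, ht.2])
  rw [mobius, powerSeriesCorrelation, div_pow, div_pow, sq_sqrt hrad, ← add_div,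
    div_eq_one_iff_eq (by positivity)]
  ring

theorem twoPointCorrelationRatio_nonneg : 0 ≤ twoPointCorrelationRatio s t := by
  have hc := powerSeriesCorrelation_nonneg hs ht
  have hsum := mobius_sq_add_powerSeriesCorrelation_sq hs ht
  have hterm :
      0 ≤ |mobius s t| * powerSeriesCorrelation s t * arcsin (powerSeriesCorrelation s t) :=
    mul_nonneg (mul_nonneg (abs_nonneg _) hc) (arcsin_nonneg.mpr hc)
  rw [twoPointCorrelationRatio]
  nlinarith

theorem twoPointCorrelationRatio_le_one : twoPointCorrelationRatio s t ≤ 1 := by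
  have hsum : |mobius s t| ^ 2 + powerSeriesCorrelation s t ^ 2 = 1 := by
    rw [sq_abs]; exact mobius_sq_add_powerSeriesCorrelation_sq hs ht
  have := mul_mul_arcsin_le_sq (abs_nonneg _) (powerSeriesCorrelation_nonneg hs ht) hsum
  rw [twoPointCorrelationRatio]
  linarith

end OpenInterval

theorem twoPointCorrelationRatio_self {s : ℝ} (hs : s ∈ Set.Ioo (-1 : ℝ) 1) :
    twoPointCorrelationRatio s s = 0 := by
  simp [twoPointCorrelationRatio, mobius_self, powerSeriesCorrelation_self hs]

/-- The normalized 2-point correlation R(s,t) = 1 + |μ(s,t)| c(s,t) arcsin c(s,t) - c(s,t)²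
satisfies 0 ≤ R(s,t) ≤ 1 on (-1,1)², and R(s,s) = 0. -/
theorem normalized_two_point_correlation_bounds (s t : ℝ)
    (hs : s ∈ Set.Ioo (-1 : ℝ) 1) (ht : t ∈ Set.Ioo (-1 : ℝ) 1) :
    0 ≤ 1 + |(s - t) / (1 - s * t)| * (Real.sqrt ((1 - s ^ 2) * (1 - t ^ 2)) / (1 - s * t))
          * Real.arcsin (Real.sqrt ((1 - s ^ 2) * (1 - t ^ 2)) / (1 - s * t))
        - (Real.sqrt ((1 - s ^ 2) * (1 - t ^ 2)) / (1 - s * t)) ^ 2 ∧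
    1 + |(s - t) / (1 - s * t)| * (Real.sqrt ((1 - s ^ 2) * (1 - t ^ 2)) / (1 - s * t))
          * Real.arcsin (Real.sqrt ((1 - s ^ 2) * (1 - t ^ 2)) / (1 - s * t))
        - (Real.sqrt ((1 - s ^ 2) * (1 - t ^ 2)) / (1 - s * t)) ^ 2 ≤ 1 ∧
    (s = t →
      1 + |(s - t) / (1 - s * t)| * (Real.sqrt ((1 - s ^ 2) * (1 - t ^ 2)) / (1 - s * t))
          * Real.arcsin (Real.sqrt ((1 - s ^ 2) * (1 - t ^ 2)) / (1 - s * t))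
        - (Real.sqrt ((1 - s ^ 2) * (1 - t ^ 2)) / (1 - s * t)) ^ 2 = 0) := by
  exact ⟨twoPointCorrelationRatio_nonneg hs ht, twoPointCorrelationRatio_le_one hs ht,
    fun h => h ▸ twoPointCorrelationRatio_self hs⟩
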